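/- Let G be a context-free grammar over terminal alphabet A = {−1,0,1} with n nonterminals and degree m, let S be a nonterminal with finite displacement δ(S) attained by some word, and let c ∈ ℕ with c ≥ m^n. Then there is a word w ∈ L(S) with c →_w c + δ(S), i.e., counter value c can reach c + δ(S) along a terminal word derived from S without the counter ever going negative. -/

import Mathlib

/-- Parse trees over a CFG. -/
inductive PTree (V A : Type) where
  | leaf : (V ⊕ A) → PTree V A
  | node : V → List (PTree V A) → PTree V A

namespace PTree

variable {V A : Type}

/-- Label of the root, as a symbol. -/
def rootLabel : PTree V A → V ⊕ A
  | leaf s => s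
  | node X _ => Sum.inl X

/-- Nonterminals occurring in the tree. -/
def nts : PTree V A → List V
  | leaf (Sum.inl X) => [X]
  | leaf (Sum.inr _) => []
  | node X ts => X :: (ts.attach.map (fun t => nts t.1)).flatten
  decreasing_by
    have := List.sizeOf_lt_of_mem t.2
    simp_wf; omega

/-- Yield: the terminal leaf labels, read from left to right. -/
def yield : PTree V A → List A
  | leaf (Sum.inl _) => []
  | leaf (Sum.inr a) => [a]
  | node _ ts => (ts.attach.map (fun t => yield t.1)).flatten
  decreasing_by
    have := List.sizeOf_lt_of_mem t.2
    simp_wf; omega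

/-- Validity w.r.t. the rules `R`. -/
inductive valid (R : V → List (V ⊕ A) → Prop) : PTree V A → Prop
  | leaf (s : V ⊕ A) : valid R (.leaf s)
  | node (X : V) (ts : List (PTree V A)) :
      R X (ts.map rootLabel) → (∀ t ∈ ts, valid R t) → valid R (.node X ts)

/-- A parse tree is complete if all its leaves are labeled by terminals. -/
inductive complete : PTree V A → Prop
  | leaf (a : A) : complete (.leaf (Sum.inr a))
  | node (X : V) (ts : List (PTree V A)) :
      (∀ t ∈ ts, complete t) → complete (.node X ts)

/-- Elementary: no node has a proper descendant labeled by the same nonterminal. -/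
inductive elem : PTree V A → Prop
  | leaf (s : V ⊕ A) : elem (.leaf s)
  | node (X : V) (ts : List (PTree V A)) :
      (∀ t ∈ ts, X ∉ nts t) → (∀ t ∈ ts, elem t) → elem (.node X ts)

end PTree


/-- Counter semantics over the alphabet `{−1, 0, 1} ⊆ ℤ`. -/
def Reach : ℕ → List ℤ → ℕ → Prop
  | c, [], d => c = d
  | c, a :: w, d => ∃ c' : ℕ, (c : ℤ) + a = (c' : ℤ) ∧ Reach c' w d

/-!
A derivation of maximal displacement can be made elementary without lowering its
displacement. Work bottom-up: once the children of a node labeled `X` are elementary, either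
no descendant is labeled `X`, or some descendant `s` is. If `s` has at least the displacement
of the whole node, keep `s`; otherwise grafting the node in place of `s` (pumping) strictly
increases the displacement, contradicting maximality. An elementary tree with branching at
most `m` has at most `m ^ n` leaves, and a word over `{-1, 0, 1}` of length at most `c` never
drives the counter below zero from `c`.
-/

namespace PTree

variable {V A : Type} {R : V → List (V ⊕ A) → Prop}

@[elab_as_elim, induction_eliminator]
theorem induction {motive : PTree V A → Prop} (leaf : ∀ s, motive (.leaf s))
    (node : ∀ X ts, (∀ t ∈ ts, motive t) → motive (.node X ts)) (t : PTree V A) : motive t :=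
  match t with
  | .leaf s => leaf s
  | .node X ts => node X ts fun t _ => induction leaf node t
decreasing_by
  have := List.sizeOf_lt_of_mem ‹t ∈ ts›
  simp_wf; omega

@[simp] theorem yield_node (X : V) (ts : List (PTree V A)) :
    yield (node X ts) = (ts.map yield).flatten := by
  rw [yield]; congr 1; exact List.attach_map_val (l := ts) (f := yield)

@[simp] theorem nts_node (X : V) (ts : List (PTree V A)) :
    nts (node X ts) = X :: (ts.map nts).flatten := by
  rw [nts]; congr 2; exact List.attach_map_val (l := ts) (f := nts)

theorem sum_yield_node [AddCommMonoid A] (X : V) (ts : List (PTree V A)) :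
    (yield (node X ts)).sum = (ts.map fun t => (yield t).sum).sum := by
  simp [List.sum_flatten, Function.comp_def]

theorem valid_node_iff {X : V} {ts : List (PTree V A)} :
    valid R (node X ts) ↔ R X (ts.map rootLabel) ∧ ∀ t ∈ ts, valid R t :=
  ⟨fun | .node _ _ hR hts => ⟨hR, hts⟩, fun h => .node X ts h.1 h.2⟩

theorem complete_node_iff {X : V} {ts : List (PTree V A)} :
    complete (node X ts) ↔ ∀ t ∈ ts, complete t :=
  ⟨fun | .node _ _ hts => hts, .node X ts⟩

theorem elem_node_iff {X : V} {ts : List (PTree V A)} :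
    elem (node X ts) ↔ (∀ t ∈ ts, X ∉ nts t) ∧ ∀ t ∈ ts, elem t :=
  ⟨fun | .node _ _ hX hts => ⟨hX, hts⟩, fun h => .node X ts h.1 h.2⟩

/-- `t` witnesses `yield t ∈ L(rootLabel t)`. -/
def IsDerivation (R : V → List (V ⊕ A) → Prop) (t : PTree V A) : Prop :=
  valid R t ∧ complete t

theorem isDerivation_node_iff {X : V} {ts : List (PTree V A)} :
    IsDerivation R (node X ts) ↔ R X (ts.map rootLabel) ∧ ∀ t ∈ ts, IsDerivation R t := by
  simp only [IsDerivation, valid_node_iff, complete_node_iff]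
  exact ⟨fun ⟨⟨hR, hv⟩, hc⟩ => ⟨hR, fun t ht => ⟨hv t ht, hc t ht⟩⟩,
    fun ⟨hR, h⟩ => ⟨⟨hR, fun t ht => (h t ht).1⟩, fun t ht => (h t ht).2⟩⟩

inductive IsSubtree : PTree V A → PTree V A → Prop
  | refl (t : PTree V A) : IsSubtree t t
  | child {s t : PTree V A} {X : V} {ts : List (PTree V A)} :
      t ∈ ts → IsSubtree s t → IsSubtree s (node X ts)

theorem IsSubtree.isDerivation {s t : PTree V A} (h : IsSubtree s t) (ht : IsDerivation R t) :
    IsDerivation R s := by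
  induction h with
  | refl => exact ht
  | child hmem _ ih => exact ih ((isDerivation_node_iff.1 ht).2 _ hmem)

theorem IsSubtree.elem {s t : PTree V A} (h : IsSubtree s t) (ht : elem t) : elem s := by
  induction h with
  | refl => exact ht
  | child hmem _ ih => exact ih ((elem_node_iff.1 ht).2 _ hmem)

theorem exists_isSubtree_of_mem_nts {X : V} {t : PTree V A} (h : X ∈ nts t) :
    ∃ s, IsSubtree s t ∧ rootLabel s = Sum.inl X := by
  induction t with
  | leaf s =>
    rcases s with Y | a <;> simp only [nts, List.mem_singleton, List.not_mem_nil] at h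
    exact ⟨_, .refl _, h ▸ rfl⟩
  | node Y ts ih =>
    rcases List.mem_cons.1 ((nts_node Y ts) ▸ h) with rfl | h
    · exact ⟨_, .refl _, rfl⟩
    · simp only [List.mem_flatten, List.mem_map] at h
      obtain ⟨_, ⟨t, ht, rfl⟩, hX⟩ := h
      obtain ⟨s, hs, hr⟩ := ih t ht hX
      exact ⟨s, .child ht hs, hr⟩

/-- Replacing the subtree `s` of `t` by a derivation `u` with the same root. -/
theorem IsSubtree.exists_replace [AddCommMonoid A] {s t u : PTree V A} (hst : IsSubtree s t)
    (ht : IsDerivation R t) (hu : IsDerivation R u) (hr : rootLabel u = rootLabel s) :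
    ∃ t', IsDerivation R t' ∧ rootLabel t' = rootLabel t ∧
      (yield t').sum + (yield s).sum = (yield t).sum + (yield u).sum := by
  induction hst with
  | refl => exact ⟨u, hu, hr, add_comm _ _⟩
  | @child t X ts hmem _ ih =>
    obtain ⟨hR, hts⟩ := isDerivation_node_iff.1 ht
    obtain ⟨t', ht', hr', hsum⟩ := ih (hts t hmem)
    obtain ⟨l₁, l₂, rfl⟩ := List.append_of_mem hmem
    refine ⟨node X (l₁ ++ t' :: l₂), isDerivation_node_iff.2 ⟨by simpa [hr'] using hR, ?_⟩, rfl, ?_⟩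
    · simp only [List.mem_append, List.mem_cons] at hts ⊢
      rintro r (hr | rfl | hr)
      exacts [hts r (.inl hr), ht', hts r (.inr (.inr hr))]
    · simp only [sum_yield_node, List.map_append, List.map_cons, List.sum_append, List.sum_cons]
      calc _ = (l₁.map fun t => (yield t).sum).sum + (l₂.map fun t => (yield t).sum).sum
              + ((yield t').sum + (yield s).sum) := by abel
        _ = _ := by rw [hsum]; abel

section Ordered

variable [AddCommMonoid A] [LinearOrder A] [IsOrderedCancelAddMonoid A]

/-- Pumping: grafting `u` in place of its own subtree `s`. -/
theorem IsSubtree.exists_sum_yield_gt {s u : PTree V A} (hsu : IsSubtree s u)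
    (hu : IsDerivation R u) (hr : rootLabel s = rootLabel u) (hlt : (yield s).sum < (yield u).sum) :
    ∃ t', IsDerivation R t' ∧ rootLabel t' = rootLabel u ∧ (yield u).sum < (yield t').sum := by
  obtain ⟨t', ht', hr', hsum⟩ := hsu.exists_replace hu hu hr.symm
  refine ⟨t', ht', hr', lt_of_add_lt_add_right (a := (yield s).sum) ?_⟩
  calc (yield u).sum + (yield s).sum < (yield u).sum + (yield u).sum := by gcongr
    _ = _ := hsum.symm

theorem exists_sum_yield_gt_or_exists_elem_node {X : V} {ts : List (PTree V A)}
    (hu : IsDerivation R (node X ts)) (hts : ∀ t ∈ ts, elem t) :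
    (∃ t', IsDerivation R t' ∧ rootLabel t' = Sum.inl X ∧
      (yield (node X ts)).sum < (yield t').sum) ∨
    ∃ t', IsDerivation R t' ∧ elem t' ∧ rootLabel t' = Sum.inl X ∧
      (yield (node X ts)).sum ≤ (yield t').sum := by
  by_cases hX : ∃ t ∈ ts, X ∈ nts t
  · obtain ⟨t, ht, hXt⟩ := hX
    obtain ⟨s, hs, hrs⟩ := exists_isSubtree_of_mem_nts hXt
    have hsu : IsSubtree s (node X ts) := .child ht hs
    rcases le_or_gt (yield (node X ts)).sum (yield s).sum with hle | hlt
    · exact .inr ⟨s, hsu.isDerivation hu, hs.elem (hts t ht), hrs, hle⟩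
    · exact .inl (hsu.exists_sum_yield_gt hu hrs hlt)
  · push Not at hX
    exact .inr ⟨node X ts, hu, elem_node_iff.2 ⟨hX, hts⟩, rfl, le_rfl⟩

theorem exists_sum_yield_gt_or_exists_elem (t : PTree V A) (ht : IsDerivation R t) :
    (∃ t', IsDerivation R t' ∧ rootLabel t' = rootLabel t ∧ (yield t).sum < (yield t').sum) ∨
    ∃ t', IsDerivation R t' ∧ elem t' ∧ rootLabel t' = rootLabel t ∧
      (yield t).sum ≤ (yield t').sum := by
  induction t with
  | leaf s => exact .inr ⟨.leaf s, ht, .leaf s, rfl, le_rfl⟩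
  | node X ts ih =>
    obtain ⟨hR, hts⟩ := isDerivation_node_iff.1 ht
    by_cases hgt : ∃ t ∈ ts, ∃ t', IsDerivation R t' ∧ rootLabel t' = rootLabel t ∧
        (yield t).sum < (yield t').sum
    · obtain ⟨t, hmem, t', ht', hr, hlt⟩ := hgt
      obtain ⟨t'', ht'', hr', hsum⟩ := (IsSubtree.child hmem (.refl t)).exists_replace ht ht' hr
      refine .inl ⟨t'', ht'', hr', lt_of_add_lt_add_right (a := (yield t).sum) ?_⟩
      calc _ < (yield (node X ts)).sum + (yield t').sum := by gcongr
        _ = _ := hsum.symm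
    push Not at hgt
    -- `f` picks an elementary replacement of each child; off `ts` it is the identity
    have hrepl : ∀ t, ∃ t', t ∈ ts → IsDerivation R t' ∧ elem t' ∧
        rootLabel t' = rootLabel t ∧ (yield t).sum ≤ (yield t').sum := fun t => by
      by_cases hmem : t ∈ ts
      · rcases ih t hmem (hts t hmem) with ⟨t', ht', hr, hlt⟩ | ⟨t', h⟩
        · exact absurd hlt (hgt t hmem t' ht' hr).not_gt
        · exact ⟨t', fun _ => h⟩
      · exact ⟨t, fun h => absurd h hmem⟩
    choose f hf using hrepl
    have hu : IsDerivation R (node X (ts.map f)) := by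
      refine isDerivation_node_iff.2 ⟨?_, by simpa using fun t ht => (hf t ht).1⟩
      have hroots : ts.map (rootLabel ∘ f) = ts.map rootLabel :=
        List.map_congr_left fun t ht => (hf t ht).2.2.1
      rwa [List.map_map, hroots]
    have hle : (yield (node X ts)).sum ≤ (yield (node X (ts.map f))).sum := by
      simp only [sum_yield_node, List.map_map, Function.comp_def]
      exact List.sum_le_sum fun t ht => (hf t ht).2.2.2
    have hets : ∀ t ∈ ts.map f, elem t := by simpa using fun t ht => (hf t ht).2.1
    rcases exists_sum_yield_gt_or_exists_elem_node hu hets with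
      ⟨t', ht', hr, hlt⟩ | ⟨t', ht', he, hr, hge⟩
    · exact .inl ⟨t', ht', hr, hle.trans_lt hlt⟩
    · exact .inr ⟨t', ht', he, hr, hle.trans hge⟩

end Ordered

theorem length_yield_le_pow [DecidableEq V] {m : ℕ} (hm : 1 ≤ m)
    (hdeg : ∀ X rhs, R X rhs → rhs.length ≤ m) {t : PTree V A} (hv : valid R t) (he : elem t) :
    (yield t).length ≤ m ^ (nts t).toFinset.card := by
  induction t with
  | leaf s => rcases s with X | a <;> simp [yield, nts]
  | node X ts ih =>
    obtain ⟨hR, hvts⟩ := valid_node_iff.1 hv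
    obtain ⟨hX, hets⟩ := elem_node_iff.1 he
    set K := (nts (node X ts)).toFinset.card
    have hXmem : X ∈ (nts (node X ts)).toFinset := by simp
    have hchild : ∀ t ∈ ts, (yield t).length ≤ m ^ (K - 1) := by
      intro t ht
      refine (ih t ht (hvts t ht) (hets t ht)).trans (Nat.pow_le_pow_right hm ?_)
      rw [← Finset.card_erase_of_mem hXmem]
      refine Finset.card_le_card fun Y hY => Finset.mem_erase.2 ⟨?_, ?_⟩
      · rintro rfl
        exact hX t ht (List.mem_toFinset.1 hY)
      · simp only [List.mem_toFinset, nts_node] at hY ⊢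
        exact List.mem_cons_of_mem _ (List.mem_flatten.2 ⟨nts t, List.mem_map_of_mem ht, hY⟩)
    calc (yield (node X ts)).length = (ts.map fun t => (yield t).length).sum := by
          simp [List.length_flatten, Function.comp_def]
      _ ≤ ts.length * m ^ (K - 1) := by
          simpa using List.sum_le_card_nsmul (ts.map fun t => (yield t).length) _
            (by simpa using hchild)
      _ ≤ m * m ^ (K - 1) := Nat.mul_le_mul_right _ (by simpa using hdeg X _ hR)
      _ = m ^ K := by rw [← pow_succ', Nat.sub_add_cancel (Finset.card_pos.2 ⟨X, hXmem⟩)]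

theorem forall_mem_yield {P : A → Prop} (hA : ∀ X rhs, R X rhs → ∀ a, Sum.inr a ∈ rhs → P a)
    {t : PTree V A} (hv : valid R t) (hroot : ∀ a, rootLabel t = .inr a → P a) :
    ∀ a ∈ yield t, P a := by
  induction t with
  | leaf s =>
    rcases s with X | b
    · simp [yield]
    · simpa [yield] using hroot b rfl
  | node X ts ih =>
    obtain ⟨hR, hvts⟩ := valid_node_iff.1 hv
    intro a ha
    simp only [yield_node, List.mem_flatten, List.mem_map] at ha
    obtain ⟨_, ⟨t, ht, rfl⟩, ha⟩ := ha
    exact ih t ht (hvts t ht) (fun b hb => hA X _ hR b (hb ▸ List.mem_map_of_mem ht)) a ha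

end PTree

theorem exists_reach_of_length_le {w : List ℤ} (hw : ∀ a ∈ w, -1 ≤ a) {c : ℕ}
    (hc : w.length ≤ c) : ∃ d : ℕ, (d : ℤ) = c + w.sum ∧ Reach c w d := by
  induction w generalizing c with
  | nil => exact ⟨c, by simp, rfl⟩
  | cons a w ih =>
    have ha := hw a List.mem_cons_self
    simp only [List.length_cons] at hc
    obtain ⟨d, hd, hreach⟩ :=
      ih (fun b hb => hw b (List.mem_cons_of_mem _ hb)) (c := (c + a).toNat) (by omega)
    exact ⟨d, by simp only [List.sum_cons]; omega, (c + a).toNat, by omega, hreach⟩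

/-- For a grammar over `{−1, 0, 1}` with `n` nonterminals and degree `m ≥ 1`, if the
displacement of `S` is attained by (the yield of) a complete parse tree `t₀` rooted
at `S`, then for every `c ≥ m ^ n` there is a word `w ∈ L(S)` with `c →_w c + δ(S)`. -/
theorem summary_attains_displacement {V : Type} [Fintype V]
    (R : V → List (V ⊕ ℤ) → Prop)
    (hA : ∀ X rhs, R X rhs → ∀ a : ℤ, Sum.inr a ∈ rhs → a = -1 ∨ a = 0 ∨ a = 1)
    (m : ℕ) (hm : 1 ≤ m) (hdeg : ∀ X rhs, R X rhs → rhs.length ≤ m)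
    (S : V) (t₀ : PTree V ℤ)
    (hv₀ : PTree.valid R t₀) (hc₀ : PTree.complete t₀)
    (hr₀ : PTree.rootLabel t₀ = Sum.inl S)
    (hmax : ∀ t : PTree V ℤ, PTree.valid R t → PTree.complete t →
      PTree.rootLabel t = Sum.inl S → (PTree.yield t).sum ≤ (PTree.yield t₀).sum)
    (c : ℕ) (hc : m ^ Fintype.card V ≤ c) :
    ∃ w : List ℤ,
      (∃ t : PTree V ℤ, PTree.valid R t ∧ PTree.complete t ∧
        PTree.rootLabel t = Sum.inl S ∧ PTree.yield t = w) ∧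
      ∃ d : ℕ, (d : ℤ) = (c : ℤ) + (PTree.yield t₀).sum ∧ Reach c w d := by
  classical
  obtain ⟨t, ht, hr, hlt⟩ | ⟨t, ⟨hv, hcomp⟩, he, hr, hle⟩ :=
    PTree.exists_sum_yield_gt_or_exists_elem t₀ ⟨hv₀, hc₀⟩
  · exact absurd (hmax t ht.1 ht.2 (hr.trans hr₀)) hlt.not_ge
  replace hr := hr.trans hr₀
  have hsum := le_antisymm (hmax t hv hcomp hr) hle
  have hlen : (PTree.yield t).length ≤ c :=
    calc (PTree.yield t).length ≤ m ^ (PTree.nts t).toFinset.card :=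
          PTree.length_yield_le_pow hm hdeg hv he
      _ ≤ m ^ Fintype.card V := Nat.pow_le_pow_right hm (Finset.card_le_univ _)
      _ ≤ c := hc
  have hletters : ∀ a ∈ PTree.yield t, -1 ≤ a :=
    PTree.forall_mem_yield
      (fun X rhs h a ha => by rcases hA X rhs h a ha with rfl | rfl | rfl <;> norm_num) hv
      (by simp [hr])
  obtain ⟨d, hd, hreach⟩ := exists_reach_of_length_le hletters hlen
  exact ⟨_, ⟨t, hv, hcomp, hr, rfl⟩, d, hsum ▸ hd, hreach⟩
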